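/- Let f : ℝ^d → ℝ be differentiable with L₂-Lipschitz gradient. Let ξ₁, ξ₂ be real random variables independent of the pair (e, r) with E[ξ₁²] ≤ Δ̃² and E[ξ₂²] ≤ Δ̃², and define g̃(x, ξ, e, r) := d (f(x + γ r e) + ξ₁ − f(x − γ r e) − ξ₂) K(r) e/(2γ). Then for every x ∈ ℝ^d, E[‖g̃(x, ξ, e, r)‖₂²] ≤ κ (6 d ‖∇f(x)‖₂² + (3/4) d² L₂² γ²) + 2 κ d² Δ̃²/γ². -/

import Mathlib

/-!
Put `h = γ r e`. The quadratic upper bound for a function with `L₂`-Lipschitz gradient, applied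
at `x + h` and `x - h`, gives `|f (x + h) - f (x - h) - 2 γ r ⟪∇f x, e⟫| ≤ L₂ γ² r²`; together
with `|r| ≤ 1` and Young's inequality this bounds the squared norm of the estimator pointwise by
`(6 d² ⟪∇f x, e⟫² + (3/4) d² L₂² γ² + d² (ξ₁² + ξ₂²) / γ²) K(r)²`. Both parts of the first factor
are independent of `K(r)²`, so the expectation factorises, and `E ⟪v, e⟫² = ‖v‖² / d` because
rotation invariance makes the `d` terms `E ⟪bᵢ, e⟫²` of an orthonormal basis equal, while they
sum to `E ‖e‖² = 1`.
-/

open MeasureTheory ProbabilityTheory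
open scoped ENNReal RealInnerProductSpace

/-- From `(F + a - b)² ≤ 2F² + 4a² + 4b²` and `F² ≤ 3A² + (3/2)(F - A)²`. -/
theorem sq_add_sub_le_of_abs_sub_le {F A B : ℝ} (h : |F - A| ≤ B) (a b : ℝ) :
    (F + a - b) ^ 2 ≤ 6 * A ^ 2 + 3 * B ^ 2 + 4 * a ^ 2 + 4 * b ^ 2 := by
  have hB : (F - A) ^ 2 ≤ B ^ 2 := sq_le_sq' (abs_le.1 h).1 (abs_le.1 h).2
  nlinarith [sq_nonneg (F - 3 * A), sq_nonneg (F - a + b), sq_nonneg (a + b)]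

theorem ae_mem_of_map_eq_smul_restrict {Ω α : Type*} [MeasurableSpace Ω] [MeasurableSpace α]
    {P : Measure Ω} {X : Ω → α} {ν : Measure α} {s : Set α} {c : ℝ≥0∞}
    (hX : AEMeasurable X P) (hs : MeasurableSet s) (hX_law : P.map X = c • ν.restrict s) :
    ∀ᵐ ω ∂P, X ω ∈ s :=
  ae_of_ae_map hX (hX_law ▸ Measure.ae_smul_measure (ae_restrict_mem hs) c)

section Smooth

variable {E : Type*} [NormedAddCommGroup E] [InnerProductSpace ℝ E] [CompleteSpace E]
  {f : E → ℝ} {L : ℝ}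

theorem abs_sub_sub_inner_gradient_le (hf : Differentiable ℝ f)
    (hlip : ∀ x y, ‖gradient f x - gradient f y‖ ≤ L * ‖x - y‖) (x h : E) :
    |f (x + h) - f x - ⟪gradient f x, h⟫| ≤ L / 2 * ‖h‖ ^ 2 := by
  set φ : ℝ → ℝ := fun t => f (x + t • h) - f x - t * ⟪gradient f x, h⟫
  have hφ : ∀ t, HasDerivAt φ ⟪gradient f (x + t • h) - gradient f x, h⟫ t := by
    intro t
    have hline : HasDerivAt (fun t : ℝ => x + t • h) h t := by
      simpa using ((hasDerivAt_id t).smul_const h).const_add x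
    have hcomp := (hf (x + t • h)).hasGradientAt.hasFDerivAt.comp_hasDerivAt t hline
    exact ((hcomp.sub_const (f x)).sub
      ((hasDerivAt_id t).mul_const ⟪gradient f x, h⟫)).congr_deriv (by simp [inner_sub_left])
  have hbound : ∀ t ∈ Set.Ico (0 : ℝ) 1,
      ‖⟪gradient f (x + t • h) - gradient f x, h⟫‖ ≤ L * ‖h‖ ^ 2 * t := by
    intro t ht
    calc ‖⟪gradient f (x + t • h) - gradient f x, h⟫‖
        ≤ ‖gradient f (x + t • h) - gradient f x‖ * ‖h‖ := norm_inner_le_norm _ _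
      _ ≤ L * ‖(x + t • h) - x‖ * ‖h‖ := by gcongr; exact hlip _ _
      _ = L * ‖h‖ ^ 2 * t := by
        rw [add_sub_cancel_left, norm_smul, Real.norm_of_nonneg ht.1]; ring
  have hB : ∀ t : ℝ, HasDerivAt (fun t => L / 2 * ‖h‖ ^ 2 * t ^ 2) (L * ‖h‖ ^ 2 * t) t := by
    intro t
    exact ((hasDerivAt_pow 2 t).const_mul (L / 2 * ‖h‖ ^ 2)).congr_deriv (by ring)
  have hφ_le := image_norm_le_of_norm_deriv_right_le_deriv_boundary
    (fun t _ => (hφ t).continuousAt.continuousWithinAt) (fun t _ => (hφ t).hasDerivWithinAt)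
    (by simp [φ]) hB hbound (Set.right_mem_Icc.2 zero_le_one)
  simpa [φ] using hφ_le

theorem abs_sub_sub_two_inner_gradient_le (hf : Differentiable ℝ f)
    (hlip : ∀ x y, ‖gradient f x - gradient f y‖ ≤ L * ‖x - y‖) (x h : E) :
    |f (x + h) - f (x - h) - 2 * ⟪gradient f x, h⟫| ≤ L * ‖h‖ ^ 2 := by
  have hplus := abs_sub_sub_inner_gradient_le hf hlip x h
  have hminus := abs_sub_sub_inner_gradient_le hf hlip x (-h)
  rw [← sub_eq_add_neg, inner_neg_right, norm_neg] at hminus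
  calc |f (x + h) - f (x - h) - 2 * ⟪gradient f x, h⟫|
      = |(f (x + h) - f x - ⟪gradient f x, h⟫) - (f (x - h) - f x - -⟪gradient f x, h⟫)| := by
        congr 1; ring
    _ ≤ L / 2 * ‖h‖ ^ 2 + L / 2 * ‖h‖ ^ 2 := (abs_sub _ _).trans (add_le_add hplus hminus)
    _ = L * ‖h‖ ^ 2 := by ring

theorem norm_two_point_estimate_sq_le (hf : Differentiable ℝ f)
    (hlip : ∀ x y, ‖gradient f x - gradient f y‖ ≤ L * ‖x - y‖) {γ s : ℝ} (hγ : γ ≠ 0)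
    (hs : |s| ≤ 1) {u : E} (hu : ‖u‖ = 1) (c k a b : ℝ) (x : E) :
    ‖(c / (2 * γ) * ((f (x + (γ * s) • u) + a) - (f (x - (γ * s) • u) + b)) * k) • u‖ ^ 2
      ≤ (6 * c ^ 2 * ⟪gradient f x, u⟫ ^ 2
          + (3 / 4 * c ^ 2 * L ^ 2 * γ ^ 2 + c ^ 2 / γ ^ 2 * (a ^ 2 + b ^ 2))) * k ^ 2 := by
  set F := f (x + (γ * s) • u) - f (x - (γ * s) • u)
  set p := ⟪gradient f x, u⟫
  have hF : |F - 2 * (γ * s) * p| ≤ L * (γ * s) ^ 2 := by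
    have := abs_sub_sub_two_inner_gradient_le hf hlip x ((γ * s) • u)
    rwa [inner_smul_right, norm_smul, hu, mul_one, Real.norm_eq_abs, sq_abs,
      ← mul_assoc] at this
  have hs2 : s ^ 2 ≤ 1 := by rw [← sq_abs]; exact pow_le_one₀ (abs_nonneg s) hs
  calc ‖(c / (2 * γ) * ((f (x + (γ * s) • u) + a) - (f (x - (γ * s) • u) + b)) * k) • u‖ ^ 2
      = c ^ 2 * k ^ 2 / (4 * γ ^ 2) * (F + a - b) ^ 2 := by
        rw [norm_smul, hu, mul_one, Real.norm_eq_abs, sq_abs]; field_simp; ring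
    _ ≤ c ^ 2 * k ^ 2 / (4 * γ ^ 2) *
        (6 * (2 * (γ * s) * p) ^ 2 + 3 * (L * (γ * s) ^ 2) ^ 2 + 4 * a ^ 2 + 4 * b ^ 2) := by
        gcongr; exact sq_add_sub_le_of_abs_sub_le hF a b
    _ = c ^ 2 * k ^ 2 / (4 * γ ^ 2) *
        (24 * γ ^ 2 * p ^ 2 * s ^ 2 + 3 * L ^ 2 * γ ^ 4 * (s ^ 2) ^ 2
          + 4 * a ^ 2 + 4 * b ^ 2) := by
        ring
    _ ≤ c ^ 2 * k ^ 2 / (4 * γ ^ 2) *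
        (24 * γ ^ 2 * p ^ 2 * 1 + 3 * L ^ 2 * γ ^ 4 * 1 ^ 2 + 4 * a ^ 2 + 4 * b ^ 2) := by
        gcongr
    _ = _ := by field_simp; ring

end Smooth

section Sphere

variable {E : Type*} [NormedAddCommGroup E] [InnerProductSpace ℝ E]
  [MeasurableSpace E] [BorelSpace E] {μ : Measure E}

theorem integral_inner_sq_eq_of_norm_eq (hμ : ∀ O : E ≃ₗᵢ[ℝ] E, μ.map O = μ) {u w : E}
    (huw : ‖u‖ = ‖w‖) : ∫ y, ⟪u, y⟫ ^ 2 ∂μ = ∫ y, ⟪w, y⟫ ^ 2 ∂μ := by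
  set O := Submodule.reflection (ℝ ∙ (u - w))ᗮ
  have hOu : O u = w := Submodule.reflection_sub huw
  conv_rhs => rw [← hμ O, integral_map O.continuous.aemeasurable
    ((continuous_const.inner continuous_id).pow 2).aestronglyMeasurable]
  simp_rw [← hOu, O.inner_map_map]

theorem integrable_inner_sq [IsFiniteMeasure μ] (h_norm : ∀ᵐ y ∂μ, ‖y‖ = 1) (u : E) :
    Integrable (fun y => ⟪u, y⟫ ^ 2) μ := by
  refine .of_bound ((continuous_const.inner continuous_id).pow 2).aestronglyMeasurable (‖u‖ ^ 2)
    (h_norm.mono fun y hy => ?_)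
  calc ‖⟪u, y⟫ ^ 2‖ = |⟪u, y⟫| ^ 2 := by rw [Real.norm_eq_abs, abs_pow]
    _ ≤ (‖u‖ * ‖y‖) ^ 2 := by gcongr; exact abs_real_inner_le_norm u y
    _ = ‖u‖ ^ 2 := by rw [hy, mul_one]

variable [FiniteDimensional ℝ E] [IsProbabilityMeasure μ]

theorem finrank_mul_integral_inner_sq (hμ : ∀ O : E ≃ₗᵢ[ℝ] E, μ.map O = μ)
    (h_norm : ∀ᵐ y ∂μ, ‖y‖ = 1) (v : E) :
    Module.finrank ℝ E * ∫ y, ⟪v, y⟫ ^ 2 ∂μ = ‖v‖ ^ 2 := by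
  have hunit : ∀ u : E, ‖u‖ = 1 → Module.finrank ℝ E * ∫ y, ⟪u, y⟫ ^ 2 ∂μ = 1 := by
    intro u hu
    let b := stdOrthonormalBasis ℝ E
    calc Module.finrank ℝ E * ∫ y, ⟪u, y⟫ ^ 2 ∂μ = ∑ i, ∫ y, ⟪b i, y⟫ ^ 2 ∂μ := by
          rw [Finset.sum_congr rfl fun i _ =>
            integral_inner_sq_eq_of_norm_eq hμ (by rw [b.orthonormal.1 i, hu] : ‖b i‖ = ‖u‖)]
          simp
      _ = ∫ y, ∑ i, ⟪b i, y⟫ ^ 2 ∂μ :=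
          (integral_finsetSum _ fun i _ => integrable_inner_sq h_norm _).symm
      _ = 1 := by
          simp_rw [b.sum_sq_inner_right]
          rw [integral_congr_ae (g := fun _ => 1) (h_norm.mono fun y hy => by simp [hy])]
          simp
  rcases eq_or_ne v 0 with rfl | hv
  · simp
  have hv' : ‖v‖ ≠ 0 := norm_ne_zero_iff.2 hv
  have hscale : ∀ y, ⟪v, y⟫ ^ 2 = ‖v‖ ^ 2 * ⟪‖v‖⁻¹ • v, y⟫ ^ 2 := fun y => by
    rw [real_inner_smul_left]; field_simp
  simp_rw [hscale, integral_const_mul]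
  rw [mul_left_comm, hunit _ (by rw [norm_smul, norm_inv, norm_norm, inv_mul_cancel₀ hv']),
    mul_one]

end Sphere

section RandomDirection

variable {Ω E : Type*} [MeasurableSpace Ω] {P : Measure Ω} [NormedAddCommGroup E]
  [MeasurableSpace E] [BorelSpace E] {e : Ω → E}

theorem ae_map_norm_eq_one (he_meas : Measurable e) (he_norm : ∀ ω, ‖e ω‖ = 1) :
    ∀ᵐ y ∂P.map e, ‖y‖ = 1 :=
  (ae_map_iff he_meas.aemeasurable (measurableSet_eq_fun measurable_norm measurable_const)).2
    (.of_forall he_norm)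

variable [InnerProductSpace ℝ E]

theorem integrable_inner_sq_comp [IsFiniteMeasure P] (he_meas : Measurable e)
    (he_norm : ∀ ω, ‖e ω‖ = 1) (v : E) : Integrable (fun ω => ⟪v, e ω⟫ ^ 2) P :=
  (integrable_map_measure ((continuous_const.inner continuous_id).pow 2).aestronglyMeasurable
    he_meas.aemeasurable).1 (integrable_inner_sq (ae_map_norm_eq_one he_meas he_norm) v)

theorem finrank_mul_integral_inner_sq_comp [FiniteDimensional ℝ E] [IsProbabilityMeasure P]
    (he_meas : Measurable e) (he_norm : ∀ ω, ‖e ω‖ = 1)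
    (he_unif : ∀ O : E ≃ₗᵢ[ℝ] E, P.map (fun ω => O (e ω)) = P.map e) (v : E) :
    Module.finrank ℝ E * ∫ ω, ⟪v, e ω⟫ ^ 2 ∂P = ‖v‖ ^ 2 := by
  have : IsProbabilityMeasure (P.map e) := Measure.isProbabilityMeasure_map he_meas.aemeasurable
  have h := finrank_mul_integral_inner_sq
    (fun O => by rw [Measure.map_map O.continuous.measurable he_meas]; exact he_unif O)
    (ae_map_norm_eq_one he_meas he_norm) v
  rwa [integral_map he_meas.aemeasurable
    ((continuous_const.inner continuous_id).pow 2).aestronglyMeasurable] at h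

end RandomDirection

section Independence

variable {Ω : Type*} [MeasurableSpace Ω] {P : Measure Ω} {X Y W : Ω → ℝ}

theorem integrable_add_mul_of_indepFun (hXW : IndepFun X W P) (hYW : IndepFun Y W P)
    (hX : Integrable X P) (hY : Integrable Y P) (hW : Integrable W P) :
    Integrable (fun ω => (X ω + Y ω) * W ω) P :=
  ((hXW.integrable_mul hX hW).add (hYW.integrable_mul hY hW)).congr
    (.of_forall fun _ => (add_mul _ _ _).symm)

theorem integral_add_mul_of_indepFun (hXW : IndepFun X W P) (hYW : IndepFun Y W P)
    (hX : Integrable X P) (hY : Integrable Y P) (hW : Integrable W P) :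
    ∫ ω, (X ω + Y ω) * W ω ∂P = ((∫ ω, X ω ∂P) + ∫ ω, Y ω ∂P) * ∫ ω, W ω ∂P := by
  rw [integral_congr_ae (g := X * W + Y * W) (.of_forall fun _ => add_mul _ _ _),
    integral_add' (hXW.integrable_mul hX hW) (hYW.integrable_mul hY hW),
    hXW.integral_mul_eq_mul_integral hX.1 hW.1, hYW.integral_mul_eq_mul_integral hY.1 hW.1,
    add_mul]

end Independence

theorem kernel_second_moment_stochastic_noise_general
    {Ω : Type*} {m0 : MeasurableSpace Ω} (P : Measure Ω) [IsProbabilityMeasure P]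
    {d : ℕ} (f : EuclideanSpace ℝ (Fin d) → ℝ) (L₂ : ℝ)
    (hf : Differentiable ℝ f)
    (hlip : ∀ x y : EuclideanSpace ℝ (Fin d), ‖gradient f x - gradient f y‖ ≤ L₂ * ‖x - y‖)
    (γ : ℝ) (hγ : 0 < γ) (Δt : ℝ)
    (e : Ω → EuclideanSpace ℝ (Fin d)) (r : Ω → ℝ) (ξ₁ ξ₂ : Ω → ℝ) (K : ℝ → ℝ)
    (he_meas : Measurable e) (he_norm : ∀ ω, ‖e ω‖ = 1)
    (he_unif : ∀ O : EuclideanSpace ℝ (Fin d) ≃ₗᵢ[ℝ] EuclideanSpace ℝ (Fin d),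
      Measure.map (fun ω => O (e ω)) P = Measure.map e P)
    (hr_meas : Measurable r)
    (hr_unif : Measure.map r P = (2⁻¹ : ℝ≥0∞) • volume.restrict (Set.Icc (-1 : ℝ) 1))
    (hindep : IndepFun e r P)
    (hξ₁_L2 : MemLp ξ₁ 2 P) (hξ₂_L2 : MemLp ξ₂ 2 P)
    (hξ₁_mom : ∫ ω, (ξ₁ ω) ^ 2 ∂P ≤ Δt ^ 2) (hξ₂_mom : ∫ ω, (ξ₂ ω) ^ 2 ∂P ≤ Δt ^ 2)
    (hξ_indep : IndepFun (fun ω => (ξ₁ ω, ξ₂ ω)) (fun ω => (e ω, r ω)) P)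
    (hK_meas : Measurable K)
    (hK2_int : Integrable (fun ω => (K (r ω)) ^ 2) P)
    (x : EuclideanSpace ℝ (Fin d)) :
    ∫ ω, ‖((d : ℝ) / (2 * γ) *
          ((f (x + (γ * r ω) • e ω) + ξ₁ ω)
            - (f (x - (γ * r ω) • e ω) + ξ₂ ω)) * K (r ω)) • e ω‖ ^ 2 ∂P
      ≤ (∫ ω, (K (r ω)) ^ 2 ∂P) *
          (6 * d * ‖gradient f x‖ ^ 2 + 3 / 4 * (d : ℝ) ^ 2 * L₂ ^ 2 * γ ^ 2)
        + 2 * (∫ ω, (K (r ω)) ^ 2 ∂P) * (d : ℝ) ^ 2 * Δt ^ 2 / γ ^ 2 := by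
  set g := gradient f x
  set X : Ω → ℝ := fun ω => 6 * (d : ℝ) ^ 2 * ⟪g, e ω⟫ ^ 2 with hX_def
  set Y : Ω → ℝ := fun ω => 3 / 4 * (d : ℝ) ^ 2 * L₂ ^ 2 * γ ^ 2
    + (d : ℝ) ^ 2 / γ ^ 2 * (ξ₁ ω ^ 2 + ξ₂ ω ^ 2) with hY_def
  have hr_ae : ∀ᵐ ω ∂P, |r ω| ≤ 1 :=
    (ae_mem_of_map_eq_smul_restrict hr_meas.aemeasurable measurableSet_Icc hr_unif).mono
      fun _ hω => abs_le.2 hω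
  have hXW : IndepFun X (fun ω => K (r ω) ^ 2) P :=
    hindep.comp (φ := fun y => 6 * (d : ℝ) ^ 2 * ⟪g, y⟫ ^ 2) (ψ := fun t => K t ^ 2)
      (by fun_prop) (by fun_prop)
  have hYW : IndepFun Y (fun ω => K (r ω) ^ 2) P :=
    hξ_indep.comp (φ := fun p : ℝ × ℝ => 3 / 4 * (d : ℝ) ^ 2 * L₂ ^ 2 * γ ^ 2
      + (d : ℝ) ^ 2 / γ ^ 2 * (p.1 ^ 2 + p.2 ^ 2))
      (ψ := fun q : EuclideanSpace ℝ (Fin d) × ℝ => K q.2 ^ 2) (by fun_prop) (by fun_prop)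
  have hξ_int : Integrable (fun ω => ξ₁ ω ^ 2 + ξ₂ ω ^ 2) P :=
    hξ₁_L2.integrable_sq.add hξ₂_L2.integrable_sq
  have hX : Integrable X P := (integrable_inner_sq_comp he_meas he_norm g).const_mul _
  have hY : Integrable Y P := (integrable_const _).add (hξ_int.const_mul _)
  have hX_mean : ∫ ω, X ω ∂P = 6 * d * ‖g‖ ^ 2 := by
    have hsphere := finrank_mul_integral_inner_sq_comp (P := P) he_meas he_norm he_unif g
    rw [finrank_euclideanSpace_fin] at hsphere
    rw [hX_def, integral_const_mul, ← hsphere]; ring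
  have hY_mean : ∫ ω, Y ω ∂P
      ≤ 3 / 4 * (d : ℝ) ^ 2 * L₂ ^ 2 * γ ^ 2 + (d : ℝ) ^ 2 / γ ^ 2 * (2 * Δt ^ 2) := by
    rw [hY_def, integral_add (integrable_const _) (hξ_int.const_mul _), integral_const,
      integral_const_mul, integral_add hξ₁_L2.integrable_sq hξ₂_L2.integrable_sq, probReal_univ,
      one_smul]
    gcongr
    linarith
  calc _ ≤ ∫ ω, (X ω + Y ω) * K (r ω) ^ 2 ∂P :=
        integral_mono_of_nonneg (.of_forall fun ω => by positivity)
          (integrable_add_mul_of_indepFun hXW hYW hX hY hK2_int)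
          (hr_ae.mono fun ω hω =>
            norm_two_point_estimate_sq_le hf hlip hγ.ne' hω (he_norm ω) _ _ _ _ x)
    _ = ((∫ ω, X ω ∂P) + ∫ ω, Y ω ∂P) * ∫ ω, K (r ω) ^ 2 ∂P :=
        integral_add_mul_of_indepFun hXW hYW hX hY hK2_int
    _ ≤ (6 * d * ‖g‖ ^ 2 + (3 / 4 * (d : ℝ) ^ 2 * L₂ ^ 2 * γ ^ 2
          + (d : ℝ) ^ 2 / γ ^ 2 * (2 * Δt ^ 2))) * ∫ ω, K (r ω) ^ 2 ∂P := by
        rw [hX_mean]; gcongr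
    _ = _ := by ring

/-- Second-moment bound for the one-point kernel-based gradient approximation
of an `L₂`-smooth function, where the oracle is corrupted by additive adversarial stochastic
noises `ξ₁, ξ₂` independent of `(e, r)` with second moments at most `Δ̃²`:
`E[‖g̃(x,ξ,e,r)‖²] ≤ κ(6d‖∇f(x)‖² + (3/4)d²L₂²γ²) + 2κd²Δ̃²/γ²`, where `κ = E[K(r)²]`. -/
theorem kernel_second_moment_stochastic_noise
    {Ω : Type*} {m0 : MeasurableSpace Ω} (P : Measure Ω) [IsProbabilityMeasure P]
    {d : ℕ} (f : EuclideanSpace ℝ (Fin d) → ℝ) (L₂ : ℝ)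
    (hf : Differentiable ℝ f)
    (hlip : ∀ x y : EuclideanSpace ℝ (Fin d), ‖gradient f x - gradient f y‖ ≤ L₂ * ‖x - y‖)
    (γ : ℝ) (hγ : 0 < γ) (Δt : ℝ)
    (e : Ω → EuclideanSpace ℝ (Fin d)) (r : Ω → ℝ) (ξ₁ ξ₂ : Ω → ℝ) (K : ℝ → ℝ)
    (he_meas : Measurable e) (he_norm : ∀ ω, ‖e ω‖ = 1)
    (he_unif : ∀ O : EuclideanSpace ℝ (Fin d) ≃ₗᵢ[ℝ] EuclideanSpace ℝ (Fin d),
      Measure.map (fun ω => O (e ω)) P = Measure.map e P)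
    (hr_meas : Measurable r)
    (hr_unif : Measure.map r P = (2⁻¹ : ℝ≥0∞) • volume.restrict (Set.Icc (-1 : ℝ) 1))
    (hindep : IndepFun e r P)
    (hξ₁_meas : Measurable ξ₁) (hξ₂_meas : Measurable ξ₂)
    (hξ₁_L2 : MemLp ξ₁ 2 P) (hξ₂_L2 : MemLp ξ₂ 2 P)
    (hξ₁_mom : ∫ ω, (ξ₁ ω) ^ 2 ∂P ≤ Δt ^ 2) (hξ₂_mom : ∫ ω, (ξ₂ ω) ^ 2 ∂P ≤ Δt ^ 2)
    (hξ_indep : IndepFun (fun ω => (ξ₁ ω, ξ₂ ω)) (fun ω => (e ω, r ω)) P)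
    (hK_meas : Measurable K)
    (hK2_int : Integrable (fun ω => (K (r ω)) ^ 2) P)
    (x : EuclideanSpace ℝ (Fin d)) :
    ∫ ω, ‖((d : ℝ) / (2 * γ) *
          ((f (x + (γ * r ω) • e ω) + ξ₁ ω)
            - (f (x - (γ * r ω) • e ω) + ξ₂ ω)) * K (r ω)) • e ω‖ ^ 2 ∂P
      ≤ (∫ ω, (K (r ω)) ^ 2 ∂P) *
          (6 * d * ‖gradient f x‖ ^ 2 + 3 / 4 * (d : ℝ) ^ 2 * L₂ ^ 2 * γ ^ 2)
        + 2 * (∫ ω, (K (r ω)) ^ 2 ∂P) * (d : ℝ) ^ 2 * Δt ^ 2 / γ ^ 2 :=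
  kernel_second_moment_stochastic_noise_general (m0 := m0) P f L₂ hf hlip γ hγ Δt e r ξ₁ ξ₂ K
    he_meas he_norm he_unif hr_meas hr_unif hindep hξ₁_L2 hξ₂_L2 hξ₁_mom hξ₂_mom hξ_indep hK_meas
    hK2_int x
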